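/- Let K ⊆ ℝⁿ be a regular cone (i.e., K ∪ (−K) is a linear subspace of ℝⁿ) with dim(span K) ≥ 3. Let B₁, …, Bₘ (m ≥ 1) be real symmetric n×n matrices, each a real linear combination of fixed symmetric matrices A₁, A₂, A₃ satisfying s₁xᵀA₁x + s₂xᵀA₂x + s₃xᵀA₃x > 0 for all nonzero x ∈ K, for some s₁, s₂, s₃ ∈ ℝ. Then the following are equivalent: (i) max{xᵀB₁x, …, xᵀBₘx} ≥ 0 for all x ∈ K; (ii) there exists t in the simplex Δₘ = {t ∈ ℝ₊ᵐ : Σtᵢ = 1} such that Σᵢ tᵢ xᵀBᵢx ≥ 0 for all x ∈ K. -/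

import Mathlib

/-!
Restricted to the subspace `V = K ∪ -K`, the form `∑ j, s j • A j` is positive definite; in
coordinates orthonormal for it, the joint values `(xᵀ Bᵢ x)ᵢ` on its unit sphere form a linear
image of the joint values of the three transformed `Aⱼ`, one of which is determined by the other
two on the sphere. Brickman's theorem (for `d ≥ 3` the joint range of two quadratic forms on the
unit sphere of `ℝᵈ` is convex) therefore makes this set convex. It misses the open negative
orthant, and a hyperplane separating the two gives the weights `t`.

Brickman's theorem reduces, via the intermediate value theorem, to the connectedness of a quadric
`{x | ‖x‖ = 1, xᵀ Q x = 0}` up to `x ↦ -x`. Diagonalising `Q`, the quadric is the preimage under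
coordinatewise squaring of a convex set `C`. Two points with the same sign pattern are joined by
lifting the segment between their squares, and the sign of coordinate `i` can be flipped whenever
some point of `C` has `i`-th coordinate zero; for `d ≥ 3` this fails for at most one coordinate.
-/

open Matrix

section SquareLift

variable {ι : Type*} {C : Set (ι → ℝ)}

theorem joinedIn_sq_preimage_of_mul_nonneg (hC : Convex ℝ C) {x y : ι → ℝ}
    (hx : x ^ 2 ∈ C) (hy : y ^ 2 ∈ C) (hxy : ∀ i, 0 ≤ x i * y i) :
    JoinedIn ((· ^ 2) ⁻¹' C) x y := by
  let σ : ι → ℝ := fun i => if 0 ≤ x i + y i then 1 else -1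
  let lift : (ι → ℝ) → ι → ℝ := fun u i => σ i * √(u i)
  have hσ : ∀ i, σ i * |x i| = x i ∧ σ i * |y i| = y i := by
    intro i
    have := hxy i
    simp only [σ]
    split_ifs <;> rcases abs_cases (x i) with ⟨hx, _⟩ | ⟨hx, _⟩ <;>
      rcases abs_cases (y i) with ⟨hy, _⟩ | ⟨hy, _⟩ <;> rw [hx, hy] <;> constructor <;> nlinarith
  have hlift_sq : lift (x ^ 2) = x ∧ lift (y ^ 2) = y := by
    simp only [lift, Pi.pow_apply, Real.sqrt_sq_eq_abs]
    exact ⟨funext fun i => (hσ i).1, funext fun i => (hσ i).2⟩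
  have hseg : JoinedIn (C ∩ Set.Ici 0) (x ^ 2) (y ^ 2) :=
    JoinedIn.of_segment_subset ((hC.inter (convex_Ici 0)).segment_subset
      ⟨hx, fun i => sq_nonneg (x i)⟩ ⟨hy, fun i => sq_nonneg (y i)⟩)
  have hcont : Continuous lift := by fun_prop
  rw [← hlift_sq.1, ← hlift_sq.2]
  refine (hseg.map hcont).mono ?_
  rintro _ ⟨u, ⟨hu, hu0⟩, rfl⟩
  show lift u ^ 2 ∈ C
  convert hu using 1
  funext i
  have hσ2 : σ i ^ 2 = 1 := by simp only [σ]; split_ifs <;> norm_num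
  simp only [lift, Pi.pow_apply, mul_pow, hσ2, one_mul, Real.sq_sqrt (hu0 i)]

theorem update_neg_sq [DecidableEq ι] (x : ι → ℝ) (i : ι) :
    Function.update x i (-x i) ^ 2 = x ^ 2 :=
  funext fun j => by rcases eq_or_ne j i with rfl | h <;> simp [Function.update_of_ne, *]

theorem joinedIn_sq_preimage_update_neg [DecidableEq ι] (hC : Convex ℝ C) {x z : ι → ℝ}
    (hx : x ^ 2 ∈ C) (hz : z ^ 2 ∈ C) {i : ι} (hzi : z i = 0) :
    JoinedIn ((· ^ 2) ⁻¹' C) x (Function.update x i (-x i)) := by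
  -- pass through `z`, re-signed like `x`; its vanishing `i`-th coordinate allows the flip
  let w : ι → ℝ := fun j => if 0 ≤ x j then |z j| else -|z j|
  have hw : w ^ 2 = z ^ 2 := funext fun j => by
    simp only [w, Pi.pow_apply]; split_ifs <;> simp [sq_abs]
  have hxw : ∀ j, 0 ≤ x j * w j := fun j => by
    simp only [w]; split_ifs with h
    · exact mul_nonneg h (abs_nonneg _)
    · nlinarith [abs_nonneg (z j)]
  have hx'w : ∀ j, 0 ≤ Function.update x i (-x i) j * w j := fun j => by
    rcases eq_or_ne j i with rfl | h
    · simp [w, hzi]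
    · simpa [Function.update_of_ne h] using hxw j
  rw [← hw] at hz
  exact (joinedIn_sq_preimage_of_mul_nonneg hC hx hz hxw).trans
    (joinedIn_sq_preimage_of_mul_nonneg hC (update_neg_sq x i ▸ hx) hz hx'w).symm

theorem joinedIn_sq_preimage_of_forall_exists_apply_eq_zero [DecidableEq ι] (hC : Convex ℝ C)
    {y : ι → ℝ} (hy : y ^ 2 ∈ C) (F : Finset ι)
    (hF : ∀ i ∈ F, ∃ z : ι → ℝ, z ^ 2 ∈ C ∧ z i = 0) :
    ∀ x : ι → ℝ, x ^ 2 ∈ C → (∀ i, x i * y i < 0 → i ∈ F) → JoinedIn ((· ^ 2) ⁻¹' C) x y := by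
  induction F using Finset.induction_on with
  | empty => exact fun x hx hxy =>
      joinedIn_sq_preimage_of_mul_nonneg hC hx hy fun i => not_lt.1 fun h => by simpa using hxy i h
  | insert a F _ ih =>
    intro x hx hxy
    have ih := ih fun i hi => hF i (Finset.mem_insert_of_mem hi)
    by_cases ha : x a * y a < 0
    · obtain ⟨z, hz, hza⟩ := hF a (Finset.mem_insert_self a F)
      refine (joinedIn_sq_preimage_update_neg hC hx hz hza).trans
        (ih _ (update_neg_sq x a ▸ hx) fun i hi => ?_)
      rcases eq_or_ne i a with rfl | h
      · simp at hi; nlinarith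
      · simpa [Function.update_of_ne h, h] using hxy i (by simpa [Function.update_of_ne h] using hi)
    · refine ih x hx fun i hi => ?_
      rcases eq_or_ne i a with rfl | h
      · exact absurd hi ha
      · simpa [h] using hxy i hi

end SquareLift

section DiagonalQuadric

variable {ι : Type*} [Fintype ι]

/-- `x ^ 2 ∈ unitQuadricSq μ` says that `x` is a unit vector with `∑ i, μ i * x i ^ 2 = 0`. -/
def unitQuadricSq (μ : ι → ℝ) : Set (ι → ℝ) := {u | ∑ i, u i = 1 ∧ ∑ i, μ i * u i = 0}

theorem convex_unitQuadricSq (μ : ι → ℝ) :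
    Convex ℝ (unitQuadricSq μ) := by
  rintro u ⟨hu1, hu2⟩ v ⟨hv1, hv2⟩ a b - - hab
  simp only [unitQuadricSq, Set.mem_ofPred_eq, Pi.add_apply, Pi.smul_apply, smul_eq_mul, mul_add,
    Finset.sum_add_distrib, mul_left_comm _ a, mul_left_comm _ b, ← Finset.mul_sum, hu1, hu2,
    hv1, hv2]
  constructor <;> linarith

theorem exists_nonneg_of_sq_mem (μ : ι → ℝ) {x : ι → ℝ}
    (hx : x ^ 2 ∈ unitQuadricSq μ) : ∃ a, 0 ≤ μ a := by
  by_contra! hneg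
  have hterm := (Finset.sum_eq_zero_iff_of_nonpos fun i _ =>
    mul_nonpos_of_nonpos_of_nonneg (hneg i).le (sq_nonneg (x i))).1 hx.2
  have : ∑ i, x i ^ 2 = 0 := Finset.sum_eq_zero fun i hi =>
    (mul_eq_zero.1 (hterm i hi)).resolve_left (hneg i).ne
  exact one_ne_zero (hx.1.symm.trans this)

theorem exists_sq_mem_apply_eq_zero (μ : ι → ℝ) {a b i : ι} (ha : a ≠ i) (hb : b ≠ i)
    (hab : μ a * μ b ≤ 0) :
    ∃ z : ι → ℝ, z ^ 2 ∈ unitQuadricSq μ ∧ z i = 0 := by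
  classical
  have h0 : (0 : ℝ) ∈ segment ℝ (μ a) (μ b) := by
    rw [segment_eq_uIcc, Set.mem_uIcc]
    rcases mul_nonpos_iff.1 hab with h | h
    · exact Or.inr ⟨h.2, h.1⟩
    · exact Or.inl ⟨h.1, h.2⟩
  obtain ⟨p, q, hp, hq, hpq, hμ⟩ := h0
  let u : ι → ℝ := Pi.single a p + Pi.single b q
  have hu : 0 ≤ u := add_nonneg (Pi.single_nonneg.2 hp) (Pi.single_nonneg.2 hq)
  refine ⟨fun k => √(u k), ?_, ?_⟩
  · have : (fun k => √(u k)) ^ 2 = u := funext fun k => by simp [Real.sq_sqrt (hu k)]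
    rw [this]
    refine ⟨by simp [u, Finset.sum_add_distrib, hpq], ?_⟩
    simp only [u, Pi.add_apply, mul_add, Finset.sum_add_distrib]
    simpa [Pi.single_apply, mul_comm] using hμ
  · simp [u, ha.symm, hb.symm]

theorem exists_sq_mem_apply_eq_zero_or (hcard : 3 ≤ Fintype.card ι) {μ x : ι → ℝ}
    (hx : x ^ 2 ∈ unitQuadricSq μ) {i j : ι} (hij : i ≠ j) :
    (∃ z : ι → ℝ, z ^ 2 ∈ unitQuadricSq μ ∧ z i = 0) ∨
      ∃ z : ι → ℝ, z ^ 2 ∈ unitQuadricSq μ ∧ z j = 0 := by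
  classical
  obtain ⟨k, -, hk⟩ := Finset.exists_mem_notMem_of_card_lt_card (s := {i, j}) (t := Finset.univ)
    ((Finset.card_le_two).trans_lt (by rw [Finset.card_univ]; omega))
  simp only [Finset.mem_insert, Finset.mem_singleton, not_or] at hk
  obtain ⟨a, ha⟩ := exists_nonneg_of_sq_mem μ hx
  obtain ⟨b, hb⟩ := exists_nonneg_of_sq_mem (-μ) (x := x) (by simpa [unitQuadricSq] using hx)
  -- a partner `c` of `k` with `μ k * μ c ≤ 0`: a two-point solution avoiding `i` or `j`
  obtain ⟨c, hc⟩ : ∃ c, μ k * μ c ≤ 0 := by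
    rcases le_or_gt 0 (μ k) with h | h
    · exact ⟨b, mul_nonpos_of_nonneg_of_nonpos h (by simpa using hb)⟩
    · exact ⟨a, mul_nonpos_of_nonpos_of_nonneg h.le ha⟩
  rcases eq_or_ne c i with rfl | hci
  · exact Or.inr (exists_sq_mem_apply_eq_zero μ hk.2 hij hc)
  · exact Or.inl (exists_sq_mem_apply_eq_zero μ hk.1 hci hc)

theorem joinedIn_or_joinedIn_neg_of_sq_mem (hcard : 3 ≤ Fintype.card ι) {μ x y : ι → ℝ}
    (hx : x ^ 2 ∈ unitQuadricSq μ) (hy : y ^ 2 ∈ unitQuadricSq μ) :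
    JoinedIn ((· ^ 2) ⁻¹' unitQuadricSq μ) x y ∨
      JoinedIn ((· ^ 2) ⁻¹' unitQuadricSq μ) x (-y) := by
  classical
  have hC := convex_unitQuadricSq μ
  by_cases hall : ∀ i, ∃ z : ι → ℝ, z ^ 2 ∈ unitQuadricSq μ ∧ z i = 0
  · exact Or.inl (joinedIn_sq_preimage_of_forall_exists_apply_eq_zero hC hy Finset.univ
      (fun i _ => hall i) x hx fun i _ => Finset.mem_univ i)
  -- at most one coordinate `i₀` cannot be flipped; flip the others to reach `y` or `-y`
  obtain ⟨i₀, hi₀⟩ := not_forall.1 hall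
  have hF : ∀ i ∈ Finset.univ.erase i₀, ∃ z : ι → ℝ, z ^ 2 ∈ unitQuadricSq μ ∧ z i = 0 :=
    fun i hi => (exists_sq_mem_apply_eq_zero_or hcard hx
      (Finset.ne_of_mem_erase hi).symm).resolve_left hi₀
  by_cases h₀ : x i₀ * y i₀ < 0
  · refine Or.inr (joinedIn_sq_preimage_of_forall_exists_apply_eq_zero hC (by rwa [neg_sq]) _ hF
      x hx fun i hi => ?_)
    refine Finset.mem_erase.2 ⟨?_, Finset.mem_univ i⟩
    rintro rfl
    simp only [Pi.neg_apply, mul_neg, neg_lt_zero] at hi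
    exact lt_asymm h₀ hi
  · refine Or.inl (joinedIn_sq_preimage_of_forall_exists_apply_eq_zero hC hy _ hF x hx
      fun i hi => ?_)
    exact Finset.mem_erase.2 ⟨by rintro rfl; exact h₀ hi, Finset.mem_univ i⟩

end DiagonalQuadric

section Brickman

variable {κ : Type*} [Fintype κ]

def unitQuadric (Q : Matrix κ κ ℝ) : Set (κ → ℝ) := {v | v ⬝ᵥ v = 1 ∧ v ⬝ᵥ Q *ᵥ v = 0}

theorem dotProduct_mulVec_mulVec_mulVec {ι : Type*} [Fintype ι] (E : Matrix ι κ ℝ)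
    (M : Matrix ι ι ℝ) (c c' : κ → ℝ) :
    E *ᵥ c ⬝ᵥ M *ᵥ (E *ᵥ c') = c ⬝ᵥ (Eᵀ * M * E) *ᵥ c' := by
  rw [dotProduct_mulVec, vecMul_mulVec, ← dotProduct_mulVec, mulVec_mulVec]

theorem joinedIn_or_joinedIn_neg_of_isSymm [DecidableEq κ] (hcard : 3 ≤ Fintype.card κ)
    {Q : Matrix κ κ ℝ} (hQ : Q.IsSymm) {x y : κ → ℝ}
    (hx : x ∈ unitQuadric Q) (hy : y ∈ unitQuadric Q) :
    JoinedIn (unitQuadric Q) x y ∨ JoinedIn (unitQuadric Q) x (-y) := by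
  have hH : Q.IsHermitian := isHermitian_iff_isSymm.2 hQ
  set U : Matrix κ κ ℝ := (hH.eigenvectorUnitary : Matrix κ κ ℝ)
  have hU : Uᵀ * U = 1 := by
    simpa [star_eq_conjTranspose] using Unitary.star_mul_self_of_mem hH.eigenvectorUnitary.2
  have hU' : U * Uᵀ = 1 := mul_eq_one_comm.1 hU
  have hQU : Uᵀ * Q * U = diagonal hH.eigenvalues := by
    conv_lhs => rw [hH.spectral_theorem]
    rw [Unitary.conjStarAlgAut_apply, star_eq_conjTranspose, conjTranspose_eq_transpose_of_trivial,
      ← Matrix.mul_assoc, ← Matrix.mul_assoc, hU, Matrix.one_mul, Matrix.mul_assoc, hU,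
      Matrix.mul_one, RCLike.ofReal_real_eq_id, Function.id_comp]
  have hmem : ∀ c, U *ᵥ c ∈ unitQuadric Q ↔ c ^ 2 ∈ unitQuadricSq hH.eigenvalues := by
    intro c
    have h1 : U *ᵥ c ⬝ᵥ U *ᵥ c = U *ᵥ c ⬝ᵥ (1 : Matrix κ κ ℝ) *ᵥ (U *ᵥ c) := by rw [one_mulVec]
    rw [unitQuadric, Set.mem_ofPred_eq, h1, dotProduct_mulVec_mulVec_mulVec,
      dotProduct_mulVec_mulVec_mulVec, Matrix.mul_one, hU, hQU, one_mulVec]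
    simp [unitQuadricSq, dotProduct, mulVec_diagonal, sq, mul_left_comm]
  have hback : ∀ v, U *ᵥ (Uᵀ *ᵥ v) = v := fun v => by rw [mulVec_mulVec, hU', one_mulVec]
  have hmap : ∀ {a b}, JoinedIn ((· ^ 2) ⁻¹' unitQuadricSq hH.eigenvalues) a b →
      JoinedIn (unitQuadric Q) (U *ᵥ a) (U *ᵥ b) := fun h =>
    (h.map (continuous_const.matrix_mulVec continuous_id)).mono
      (Set.image_subset_iff.2 fun c hc => (hmem c).2 hc)
  rw [← hback x, ← hback y, ← mulVec_neg]
  exact (joinedIn_or_joinedIn_neg_of_sq_mem hcard ((hmem _).1 ((hback x).symm ▸ hx))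
    ((hmem _).1 ((hback y).symm ▸ hy))).imp hmap hmap

theorem JoinedIn.exists_mem_apply_eq {X : Type*} [TopologicalSpace X] {S : Set X} {x y : X}
    (h : JoinedIn S x y) {f : X → ℝ} (hf : Continuous f) {c : ℝ}
    (hc : c ∈ segment ℝ (f x) (f y)) : ∃ z ∈ S, f z = c := by
  have hconn := isPreconnected_range h.somePath.continuous
  rw [segment_eq_uIcc] at hc
  obtain ⟨z, ⟨t, rfl⟩, hz⟩ : c ∈ f '' Set.range h.somePath := by
    rcases le_total (f x) (f y) with hle | hle
    · rw [Set.uIcc_of_le hle] at hc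
      exact hconn.intermediate_value ⟨0, h.somePath.source⟩ ⟨1, h.somePath.target⟩
        hf.continuousOn hc
    · rw [Set.uIcc_of_ge hle] at hc
      exact hconn.intermediate_value ⟨1, h.somePath.target⟩ ⟨0, h.somePath.source⟩
        hf.continuousOn hc
  exact ⟨_, h.somePath_mem t, hz⟩

theorem Prod.eq_of_dotProduct_eq_of_cross_eq {d u v : ℝ × ℝ} (hd : d ≠ 0)
    (h₁ : d.1 * u.1 + d.2 * u.2 = d.1 * v.1 + d.2 * v.2)
    (h₂ : d.2 * u.1 - d.1 * u.2 = d.2 * v.1 - d.1 * v.2) : u = v := by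
  have hd' : d.1 ^ 2 + d.2 ^ 2 ≠ 0 := by
    contrapose! hd
    obtain ⟨h₁, h₂⟩ := (add_eq_zero_iff_of_nonneg (sq_nonneg _) (sq_nonneg _)).1 hd
    exact Prod.ext (pow_eq_zero_iff two_ne_zero |>.1 h₁) (pow_eq_zero_iff two_ne_zero |>.1 h₂)
  refine Prod.ext (mul_left_cancel₀ hd' ?_) (mul_left_cancel₀ hd' ?_)
  · linear_combination d.1 * h₁ + d.2 * h₂
  · linear_combination d.2 * h₁ - d.1 * h₂

/-- Brickman's theorem. -/
theorem convex_image_sphere [DecidableEq κ] (hcard : 3 ≤ Fintype.card κ) {M₁ M₂ : Matrix κ κ ℝ}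
    (h₁ : M₁.IsSymm) (h₂ : M₂.IsSymm) :
    Convex ℝ ((fun x => (x ⬝ᵥ M₁ *ᵥ x, x ⬝ᵥ M₂ *ᵥ x)) '' {x | x ⬝ᵥ x = 1}) := by
  set q : (κ → ℝ) → ℝ × ℝ := fun x => (x ⬝ᵥ M₁ *ᵥ x, x ⬝ᵥ M₂ *ᵥ x)
  rintro _ ⟨x, hx, rfl⟩ _ ⟨y, hy, rfl⟩ a b ha hb hab
  set d := q y - q x
  by_cases hd : d = 0
  · rw [sub_eq_zero.1 hd, ← add_smul, hab, one_smul]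
    exact ⟨x, hx, rfl⟩
  -- `unitQuadric Q` contains `x` and `y`, and the `d`-cross product of `q` is constant on it
  set γ := d.2 * (q x).1 - d.1 * (q x).2
  set Q := d.2 • M₁ - d.1 • M₂ - γ • (1 : Matrix κ κ ℝ)
  have hQ : Q.IsSymm := ((h₁.smul _).sub (h₂.smul _)).sub (isSymm_one.smul _)
  have hQq : ∀ v, v ⬝ᵥ v = 1 → v ⬝ᵥ Q *ᵥ v = d.2 * (q v).1 - d.1 * (q v).2 - γ := by
    intro v hv
    simp [Q, q, sub_mulVec, smul_mulVec, dotProduct_sub, hv]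
  have hxS : x ∈ unitQuadric Q := ⟨hx, by rw [hQq x hx]; ring⟩
  have hyS : y ∈ unitQuadric Q :=
    ⟨hy, by rw [hQq y hy]; simp only [γ, d, Prod.fst_sub, Prod.snd_sub]; ring⟩
  have hneg : q (-y) = q y := by simp [q, mulVec_neg]
  -- along a path in it from `x` to `±y`, the `d`-component of `q` hits that of the target
  set ℓ : ℝ × ℝ → ℝ := fun p => d.1 * p.1 + d.2 * p.2
  have hf : Continuous (ℓ ∘ q) := by fun_prop
  obtain ⟨z, ⟨hz, hzQ⟩, hℓz⟩ : ∃ z ∈ unitQuadric Q,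
      ℓ (q z) = ℓ (a • q x + b • q y) := by
    have hc : ℓ (a • q x + b • q y) ∈ segment ℝ (ℓ (q x)) (ℓ (q y)) :=
      ⟨a, b, ha, hb, hab, by simp only [ℓ, Prod.fst_add, Prod.snd_add, Prod.smul_fst,
        Prod.smul_snd, smul_eq_mul]; ring⟩
    rcases joinedIn_or_joinedIn_neg_of_isSymm hcard hQ hxS hyS with h | h
    · exact h.exists_mem_apply_eq hf hc
    · exact h.exists_mem_apply_eq hf (by simpa only [Function.comp_apply, hneg] using hc)
  refine ⟨z, hz, Prod.eq_of_dotProduct_eq_of_cross_eq hd hℓz ?_⟩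
  rw [hQq z hz] at hzQ
  simp only [γ, d, Prod.fst_add, Prod.snd_add, Prod.smul_fst, Prod.smul_snd, Prod.fst_sub,
    Prod.snd_sub, smul_eq_mul] at hzQ ⊢
  linear_combination hzQ - ((q y).2 * (q x).1 - (q x).2 * (q y).1) * hab

theorem dotProduct_sum_smul_mulVec {ι : Type*} [Fintype ι] (s : ι → ℝ) (M : ι → Matrix κ κ ℝ)
    (x : κ → ℝ) : x ⬝ᵥ (∑ j, s j • M j) *ᵥ x = ∑ j, s j * (x ⬝ᵥ M j *ᵥ x) := by
  simp [sum_mulVec, dotProduct_sum, smul_mulVec]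

theorem eq_of_sum_mul_eq_of_forall_ne {ι : Type*} [Fintype ι] {s w w' : ι → ℝ} {j₀ : ι}
    (hj₀ : s j₀ ≠ 0) (hne : ∀ j ≠ j₀, w j = w' j)
    (hsum : ∑ j, s j * w j = ∑ j, s j * w' j) : w = w' := by
  classical
  funext j
  rcases eq_or_ne j j₀ with rfl | hj
  · rw [← sub_eq_zero, ← Finset.sum_sub_distrib, Finset.sum_eq_single j] at hsum
    · exact sub_eq_zero.1 ((mul_eq_zero.1 (by linear_combination hsum)).resolve_left hj₀)
    · exact fun i _ hi => by rw [hne i hi, sub_self]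
    · exact fun h => absurd (Finset.mem_univ j) h
  · exact hne j hj

theorem convex_image_sphere_of_sum_smul_eq_one [DecidableEq κ] (hcard : 3 ≤ Fintype.card κ)
    {M : Fin 3 → Matrix κ κ ℝ} (hM : ∀ j, (M j).IsSymm) {s : Fin 3 → ℝ}
    (hs : ∑ j, s j • M j = 1) :
    Convex ℝ ((fun x j => x ⬝ᵥ M j *ᵥ x) '' {x | x ⬝ᵥ x = 1}) := by
  have hsum : ∀ x : κ → ℝ, x ⬝ᵥ x = 1 → ∑ j, s j * (x ⬝ᵥ M j *ᵥ x) = 1 := fun x hx => by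
    rw [← dotProduct_sum_smul_mulVec, hs, one_mulVec, hx]
  -- the form `M j₀` is determined by the other two on the unit sphere
  obtain ⟨j₀, hj₀⟩ : ∃ j₀, s j₀ ≠ 0 := by
    have : Nonempty κ := Fintype.card_pos_iff.1 (by omega)
    by_contra! h
    exact one_ne_zero (hs.symm.trans (by simp [h]) : (1 : Matrix κ κ ℝ) = 0)
  obtain ⟨j₁, j₂, hcover⟩ : ∃ j₁ j₂ : Fin 3, ∀ j ≠ j₀, j = j₁ ∨ j = j₂ := by
    clear hj₀; revert j₀; decide
  rintro _ ⟨x, hx, rfl⟩ _ ⟨y, hy, rfl⟩ a b ha hb hab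
  obtain ⟨z, hz, hzq⟩ :=
    convex_image_sphere hcard (hM j₁) (hM j₂) ⟨x, hx, rfl⟩ ⟨y, hy, rfl⟩ ha hb hab
  simp only [Prod.ext_iff, Prod.fst_add, Prod.snd_add, Prod.smul_fst, Prod.smul_snd] at hzq
  refine ⟨z, hz, eq_of_sum_mul_eq_of_forall_ne hj₀ (fun j hj => ?_) ?_⟩
  · rcases hcover j hj with rfl | rfl
    exacts [hzq.1, hzq.2]
  · simp only [Pi.add_apply, Pi.smul_apply, smul_eq_mul, mul_add, mul_left_comm _ a,
      mul_left_comm _ b, Finset.sum_add_distrib, ← Finset.mul_sum, hsum z hz, hsum x hx, hsum y hy]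
    linarith

theorem convex_image_sphere_of_mem_span [DecidableEq κ] {m : Type*} [Fintype m]
    (hcard : 3 ≤ Fintype.card κ) {M : Fin 3 → Matrix κ κ ℝ} (hM : ∀ j, (M j).IsSymm)
    {s : Fin 3 → ℝ} (hs : ∑ j, s j • M j = 1) {N : m → Matrix κ κ ℝ}
    (hN : ∀ i, ∃ r : Fin 3 → ℝ, N i = ∑ j, r j • M j) :
    Convex ℝ ((fun x i => x ⬝ᵥ N i *ᵥ x) '' {x | x ⬝ᵥ x = 1}) := by
  choose r hr using hN
  have hlin : (fun x i => x ⬝ᵥ N i *ᵥ x) =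
      (Matrix.of r).mulVecLin ∘ fun x j => x ⬝ᵥ M j *ᵥ x := by
    funext x i
    rw [hr, dotProduct_sum_smul_mulVec]
    rfl
  rw [hlin, Set.image_comp]
  exact (convex_image_sphere_of_sum_smul_eq_one hcard hM hs).linear_image _

theorem dotProduct_mulVec_nonneg_of_forall_unit {N : Matrix κ κ ℝ}
    (h : ∀ u, u ⬝ᵥ u = 1 → 0 ≤ u ⬝ᵥ N *ᵥ u) (c : κ → ℝ) : 0 ≤ c ⬝ᵥ N *ᵥ c := by
  rcases eq_or_ne c 0 with rfl | hc
  · simp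
  have hpos : 0 < c ⬝ᵥ c := lt_of_le_of_ne (Finset.sum_nonneg fun i _ => mul_self_nonneg (c i))
    (Ne.symm (dotProduct_self_eq_zero.not.2 hc))
  set r := (√(c ⬝ᵥ c))⁻¹
  have hr : r * r = (c ⬝ᵥ c)⁻¹ := by rw [← mul_inv, Real.mul_self_sqrt hpos.le]
  have := h (r • c) (by rw [dotProduct_smul, smul_dotProduct, smul_eq_mul, smul_eq_mul,
    ← mul_assoc, hr, inv_mul_cancel₀ hpos.ne'])
  rw [mulVec_smul, dotProduct_smul, smul_dotProduct, smul_eq_mul, smul_eq_mul, ← mul_assoc,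
    hr] at this
  exact nonneg_of_mul_nonneg_right this (inv_pos.2 hpos)

end Brickman

theorem transpose_mul_sum_smul_mul {n k ι : Type*} [Fintype n] [Fintype k] [Fintype ι]
    (E : Matrix n k ℝ) (r : ι → ℝ) (M : ι → Matrix n n ℝ) :
    Eᵀ * (∑ j, r j • M j) * E = ∑ j, r j • (Eᵀ * M j * E) := by
  simp [Matrix.mul_sum, Matrix.sum_mul]

theorem exists_transpose_mul_mul_eq_one {ι : Type*} [Fintype ι] [DecidableEq ι]
    (V : Submodule ℝ (ι → ℝ)) {P : Matrix ι ι ℝ} (hP : P.IsSymm)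
    (hpos : ∀ x ∈ V, x ≠ 0 → 0 < x ⬝ᵥ P *ᵥ x) :
    ∃ E : Matrix ι (Fin (Module.finrank ℝ V)) ℝ,
      Eᵀ * P * E = 1 ∧ LinearMap.range E.mulVecLin = V := by
  -- rescale a `P`-orthogonal basis of `V` to a `P`-orthonormal one and take it as columns
  let β : LinearMap.BilinForm ℝ V := (Matrix.toLinearMap₂' ℝ P).compl₁₂ V.subtype V.subtype
  have hβ : ∀ x y : V, β x y = (x : ι → ℝ) ⬝ᵥ P *ᵥ y := fun x y => toLinearMap₂'_apply' P x y
  have hβsymm : LinearMap.IsSymm β := ⟨fun x y => by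
    rw [RingHom.id_apply, hβ, hβ, ← hP.eq, dotProduct_transpose_mulVec, hP.eq]⟩
  have : Invertible (2 : ℝ) := invertibleOfNonzero two_ne_zero
  obtain ⟨v, hv⟩ := LinearMap.BilinForm.exists_orthogonal_basis hβsymm
  have hvpos : ∀ k, 0 < β (v k) (v k) := fun k => by
    rw [hβ]; exact hpos _ (v k).2 (by simpa using v.ne_zero k)
  let e := v.isUnitSMul (w := fun k => (√(β (v k) (v k)))⁻¹)
    fun k => (inv_pos.2 (Real.sqrt_pos.2 (hvpos k))).ne'.isUnit
  set E : Matrix ι (Fin (Module.finrank ℝ V)) ℝ := Matrix.of fun i k => (e k : ι → ℝ) i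
  refine ⟨E, ?_, ?_⟩
  · ext k l
    have hcol : ∀ k, E *ᵥ Pi.single k 1 = e k := fun k => by
      rw [mulVec_single_one]; rfl
    trans Pi.single k 1 ⬝ᵥ (Eᵀ * P * E) *ᵥ Pi.single l 1
    · simp
    rw [← dotProduct_mulVec_mulVec_mulVec, hcol, hcol, ← hβ]
    simp only [e, Module.Basis.isUnitSMul_apply, map_smul, LinearMap.smul_apply, smul_eq_mul,
      one_apply]
    split_ifs with h
    · subst h
      field_simp
      rw [Real.sq_sqrt (hvpos k).le, div_self (hvpos k).ne']
    · rw [hv h, mul_zero, mul_zero]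
  · have : E.mulVecLin = V.subtype ∘ₗ e.equivFun.symm.toLinearMap := by
      ext c i
      simp [E, mulVec, dotProduct, Module.Basis.equivFun_symm_apply, Pi.single_apply]
    rw [this, LinearMap.range_comp_of_range_eq_top _ (LinearEquiv.range _), Submodule.range_subtype]

theorem exists_nonneg_ne_zero_forall_sum_mul_nonneg {ι : Type*} [Fintype ι]
    {Z : Set (ι → ℝ)} (hZ : Convex ℝ Z) (hne : Z.Nonempty) (h : ∀ z ∈ Z, ∃ i, 0 ≤ z i) :
    ∃ t : ι → ℝ, 0 ≤ t ∧ t ≠ 0 ∧ ∀ z ∈ Z, 0 ≤ ∑ i, t i * z i := by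
  classical
  let O : Set (ι → ℝ) := Set.univ.pi fun _ => Set.Iio 0
  have hdisj : Disjoint O Z := Set.disjoint_left.2 fun z hzO hzZ =>
    let ⟨i, hi⟩ := h z hzZ; (hzO i trivial).not_ge hi
  obtain ⟨f, u, hfO, hfZ⟩ := geometric_hahn_banach_open (convex_pi fun _ _ => convex_Iio 0)
    (isOpen_set_pi Set.finite_univ fun _ _ => isOpen_Iio) hZ hdisj
  -- `f ≤ u` on the closure of `O`, the nonpositive orthant, which is a cone
  have hfu : ∀ w : ι → ℝ, w ≤ 0 → f w ≤ u := by
    have hcl : closure O ⊆ {w | f w ≤ u} :=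
      (closure_mono fun w hw => hfO w hw).trans (closure_lt_subset_le f.continuous continuous_const)
    intro w hw
    exact hcl (by rw [closure_pi_set]; exact fun i _ => by simpa using hw i)
  have hu : 0 ≤ u := by simpa using hfu 0 le_rfl
  have hf : ∀ w : ι → ℝ, w ≤ 0 → f w ≤ 0 := by
    intro w hw
    by_contra! hpos
    have := hfu (((u + 1) / f w) • w) (smul_nonpos_of_nonneg_of_nonpos (by positivity) hw)
    rw [map_smul, smul_eq_mul, div_mul_cancel₀ _ hpos.ne'] at this
    linarith
  let t : ι → ℝ := fun i => f (Pi.single i 1)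
  have hft : ∀ w, f w = ∑ i, t i * w i := fun w => by
    conv_lhs => rw [← Finset.univ_sum_single w]
    simp only [map_sum, t]
    refine Finset.sum_congr rfl fun i _ => ?_
    rw [mul_comm, ← smul_eq_mul, ← map_smul, ← Pi.single_smul', smul_eq_mul, mul_one]
  refine ⟨t, fun i => ?_, fun ht => ?_, fun z hz => ?_⟩
  · simpa [t] using hf (-Pi.single i 1) (by simp [Pi.single_nonneg])
  · obtain ⟨z, hz⟩ := hne
    have h₁ := hfO (fun _ => -1) fun _ _ => by simp
    have h₂ := hfZ z hz
    simp only [hft, ht, Pi.zero_apply, zero_mul, Finset.sum_const_zero] at h₁ h₂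
    linarith
  · rw [← hft]; exact hu.trans (hfZ z hz)

theorem exists_mem_stdSimplex_forall_sum_mul_nonneg {ι : Type*} [Fintype ι]
    {Z : Set (ι → ℝ)} (hZ : Convex ℝ Z) (hne : Z.Nonempty) (h : ∀ z ∈ Z, ∃ i, 0 ≤ z i) :
    ∃ t ∈ stdSimplex ℝ ι, ∀ z ∈ Z, 0 ≤ ∑ i, t i * z i := by
  obtain ⟨t, ht0, htne, ht⟩ := exists_nonneg_ne_zero_forall_sum_mul_nonneg hZ hne h
  obtain ⟨i₀, hi₀⟩ := Function.ne_iff.1 htne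
  have hT : 0 < ∑ i, t i :=
    Finset.sum_pos' (fun i _ => ht0 i) ⟨i₀, Finset.mem_univ _, (ht0 i₀).lt_of_ne' hi₀⟩
  refine ⟨(∑ i, t i)⁻¹ • t, ⟨fun i => mul_nonneg (inv_nonneg.2 hT.le) (ht0 i), ?_⟩, fun z hz => ?_⟩
  · simp [← Finset.mul_sum, inv_mul_cancel₀ hT.ne']
  · simpa [mul_assoc, ← Finset.mul_sum] using mul_nonneg (inv_nonneg.2 hT.le) (ht z hz)

theorem exists_nonneg_of_mem_stdSimplex {ι : Type*} [Fintype ι] {t a : ι → ℝ}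
    (ht : t ∈ stdSimplex ℝ ι) (h : 0 ≤ ∑ i, t i * a i) : ∃ i, 0 ≤ a i := by
  have : Nonempty ι := by
    by_contra! hι
    simpa [Finset.univ_eq_empty] using ht.2
  obtain ⟨i₀, hi₀⟩ := Finite.exists_max a
  refine ⟨i₀, h.trans ?_⟩
  calc ∑ i, t i * a i ≤ ∑ i, t i * a i₀ :=
        Finset.sum_le_sum fun i _ => mul_le_mul_of_nonneg_left (hi₀ i) (ht.1 i)
    _ = a i₀ := by rw [← Finset.sum_mul, ht.2, one_mul]

section RegularCone

variable {E : Type*} [AddCommGroup E] [Module ℝ E] {K : Set E} {V : Submodule ℝ E}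

theorem forall_mem_of_union_neg_eq (hreg : K ∪ -K = V) {p : E → Prop} (hp : ∀ x, p (-x) → p x)
    (hK : ∀ x ∈ K, p x) : ∀ x ∈ V, p x := by
  intro x hx
  rcases (hreg ▸ hx : x ∈ K ∪ -K) with hx | hx
  · exact hK x hx
  · exact hp x (hK (-x) hx)

theorem span_eq_of_union_neg_eq (hreg : K ∪ -K = V) : Submodule.span ℝ K = V :=
  le_antisymm (Submodule.span_le.2 (hreg ▸ Set.subset_union_left))
    (forall_mem_of_union_neg_eq hreg (fun x hx => neg_neg x ▸ neg_mem hx)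
      fun _ hx => Submodule.subset_span hx)

end RegularCone

theorem exists_mem_stdSimplex_forall_mem_submodule {n m : Type*} [Fintype n] [DecidableEq n]
    [Fintype m] (V : Submodule ℝ (n → ℝ)) (hV : 3 ≤ Module.finrank ℝ V)
    {A : Fin 3 → Matrix n n ℝ} (hA : ∀ j, (A j).IsSymm) {s : Fin 3 → ℝ}
    (hs : ∀ x ∈ V, x ≠ 0 → 0 < ∑ j, s j * (x ⬝ᵥ A j *ᵥ x)) {B : m → Matrix n n ℝ}
    (hB : ∀ i, ∃ r : Fin 3 → ℝ, B i = ∑ j, r j • A j) (h : ∀ x ∈ V, ∃ i, 0 ≤ x ⬝ᵥ B i *ᵥ x) :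
    ∃ t ∈ stdSimplex ℝ m, ∀ x ∈ V, 0 ≤ ∑ i, t i * (x ⬝ᵥ B i *ᵥ x) := by
  have hP : (∑ j, s j • A j).IsSymm := by
    simp [IsSymm, transpose_sum, (hA _).eq]
  obtain ⟨E, hEP, hE⟩ := exists_transpose_mul_mul_eq_one V hP fun x hx hx0 => by
    rw [dotProduct_sum_smul_mulVec]; exact hs x hx hx0
  have hEV : ∀ c, E *ᵥ c ∈ V := fun c => hE.le (LinearMap.mem_range_self E.mulVecLin c)
  have hZ := convex_image_sphere_of_mem_span (M := fun j => Eᵀ * A j * E)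
    (N := fun i => Eᵀ * B i * E) (by simpa using hV)
    (fun j => by simp [IsSymm, transpose_mul, (hA j).eq, Matrix.mul_assoc])
    (by rw [← transpose_mul_sum_smul_mul, hEP])
    fun i => (hB i).imp fun r hr => by rw [hr, transpose_mul_sum_smul_mul]
  have hsphere : {c : Fin (Module.finrank ℝ V) → ℝ | c ⬝ᵥ c = 1}.Nonempty :=
    ⟨Pi.single ⟨0, by omega⟩ 1, by simp⟩
  obtain ⟨t, ht, htZ⟩ := exists_mem_stdSimplex_forall_sum_mul_nonneg hZ (hsphere.image _)
    (by rintro _ ⟨c, -, rfl⟩; simpa [← dotProduct_mulVec_mulVec_mulVec] using h _ (hEV c))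
  refine ⟨t, ht, fun x hx => ?_⟩
  obtain ⟨c, rfl⟩ : x ∈ LinearMap.range E.mulVecLin := hE.ge hx
  rw [← dotProduct_sum_smul_mulVec, mulVecLin_apply, dotProduct_mulVec_mulVec_mulVec]
  refine dotProduct_mulVec_nonneg_of_forall_unit (fun u hu => ?_) c
  rw [transpose_mul_sum_smul_mul, dotProduct_sum_smul_mulVec]
  exact htZ _ ⟨u, hu, rfl⟩

theorem further_extended_yuan (n m : ℕ)
    (K : Set (Fin n → ℝ)) (V : Submodule ℝ (Fin n → ℝ))
    (hreg : K ∪ (-K) = (V : Set (Fin n → ℝ)))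
    (hdim : 3 ≤ Module.finrank ℝ (Submodule.span ℝ K))
    (B : Fin m → Matrix (Fin n) (Fin n) ℝ)
    (A : Fin 3 → Matrix (Fin n) (Fin n) ℝ)
    (hAsym : ∀ j, (A j).IsSymm)
    (hgen : ∀ i, ∃ r : Fin 3 → ℝ, B i = ∑ j, r j • A j)
    (hs : ∃ s : Fin 3 → ℝ, ∀ x ∈ K, x ≠ 0 →
        0 < ∑ j, s j * (x ⬝ᵥ (A j) *ᵥ x)) :
    (∀ x ∈ K, ∃ i, 0 ≤ x ⬝ᵥ (B i) *ᵥ x) ↔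
    (∃ t : Fin m → ℝ, (∀ i, 0 ≤ t i) ∧ (∑ i, t i = 1) ∧
      ∀ x ∈ K, 0 ≤ ∑ i, t i * (x ⬝ᵥ (B i) *ᵥ x)) := by
  obtain ⟨s, hs⟩ := hs
  have hneg : ∀ (M : Matrix (Fin n) (Fin n) ℝ) x, -x ⬝ᵥ M *ᵥ -x = x ⬝ᵥ M *ᵥ x := by
    simp [mulVec_neg]
  constructor
  · intro hI
    obtain ⟨t, ⟨ht0, ht1⟩, ht⟩ := exists_mem_stdSimplex_forall_mem_submodule V
      (span_eq_of_union_neg_eq hreg ▸ hdim) hAsym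
      (forall_mem_of_union_neg_eq hreg
        (fun x h hx0 => by simpa [hneg] using h (neg_ne_zero.2 hx0)) hs)
      hgen (forall_mem_of_union_neg_eq hreg (fun x => by simp only [hneg]; exact id) hI)
    exact ⟨t, ht0, ht1, fun x hx => ht x ((hreg ▸ Set.subset_union_left : K ⊆ V) hx)⟩
  · rintro ⟨t, ht0, ht1, ht⟩ x hx
    exact exists_nonneg_of_mem_stdSimplex ⟨ht0, ht1⟩ (ht x hx)
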